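/- arXiv:2301.11849 — 2 statements merged into one kernel-verified Lean document; each statement's English description precedes it below -/
import Mathlib

section
/- Fix k ≥ 2 and pattern T with T_ℓ = 1 iff ℓ ∈ {0, k+1}. In the NEAR-OR gadget of the previous context attached to any external graph G sharing exactly the operand vertices, every pure Nash equilibrium t of the union graph H satisfies t_w = 0 (the unique membrane vertex w is inactive). -/
/-- Number of active neighbors. -/
noncomputable def degA {Ω : Type} (Adj : Ω → Ω → Prop) (s : Ω → Bool) (v : Ω) : ℕ :=
  Set.ncard {u | Adj v u ∧ s u = true}

/-- PNE for the picky pattern `T_ℓ = 1` iff `ℓ ∈ {0, k+1}`. -/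
def isPNE {Ω : Type} (k : ℕ) (Adj : Ω → Ω → Prop) (s : Ω → Bool) : Prop :=
  ∀ v, s v = true ↔ (degA Adj s v = 0 ∨ degA Adj s v = k + 1)

/-- Gadget-internal vertices: `inl 0 = w`, `inl 1 = y`, `inl 2 = z`,
`inr (inl i) = y_i ∈ Y`, `inr (inr i) = z_i ∈ Z`. -/
abbrev Gk (k : ℕ) := Fin 3 ⊕ (Fin k ⊕ Fin k)

/-- Gadget-internal adjacency: triangle on `{w,y,z}`, `y ~ Y`, `z ~ Z`. -/
def adjGk (k : ℕ) : Gk k → Gk k → Prop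
  | Sum.inl a, Sum.inl b => a ≠ b
  | Sum.inl a, Sum.inr (Sum.inl _) => a = 1
  | Sum.inr (Sum.inl _), Sum.inl a => a = 1
  | Sum.inl a, Sum.inr (Sum.inr _) => a = 2
  | Sum.inr (Sum.inr _), Sum.inl a => a = 2
  | _, _ => False

/-- The union `H` of an external graph `G` on `V` (sharing exactly the operand
vertices `x i`) with the NEAR-OR gadget for `k ≥ 2`; each operand is adjacent
(within the gadget) only to `w`. -/
def adjH {V : Type} {l k : ℕ} (AdjV : V → V → Prop) (x : Fin l → V) :
    (V ⊕ Gk k) → (V ⊕ Gk k) → Prop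
  | Sum.inl a, Sum.inl b => AdjV a b
  | Sum.inl a, Sum.inr g => g = Sum.inl 0 ∧ ∃ i, a = x i
  | Sum.inr g, Sum.inl a => g = Sum.inl 0 ∧ ∃ i, a = x i
  | Sum.inr g, Sum.inr g' => adjGk k g g'

/-
Suppose `w` is active. A vertex of `Y` sees only `y`, so it plays the opposite of `y`.
Hence if `y` were active, its active neighbours would be `w` and possibly `z`: one or two
of them, which is neither `0` nor `k + 1 ≥ 3`. So `y`, and symmetrically `z`, is inactive.
But then all of `Y` is active and `y` has exactly the `k + 1` active neighbours `w` and `Y`,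
so `y` should play `1`.
-/

namespace isPNE

variable {Ω : Type} {k : ℕ} {Adj : Ω → Ω → Prop} {s : Ω → Bool}

theorem leaf_iff (h : isPNE k Adj s) (hk : k ≠ 0) {v p : Ω} (hv : ∀ u, Adj v u ↔ u = p) :
    s v = true ↔ s p = false := by
  rw [h v, degA]
  cases hp : s p
  · have hN : {u | Adj v u ∧ s u = true} = ∅ := by
      ext u
      simp only [hv, Set.mem_ofPred_eq, Set.mem_empty_iff_false, iff_false, not_and]
      rintro rfl
      simp [hp]
    simp [hN]
  · have hN : {u | Adj v u ∧ s u = true} = {p} := by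
      ext u
      simp only [hv, Set.mem_ofPred_eq, Set.mem_singleton_iff, and_iff_left_iff_imp]
      rintro rfl
      exact hp
    simp only [hN, Set.ncard_singleton, Bool.true_eq_false, iff_false]
    omega

variable {c a b : Ω} {leaf : Fin k → Ω}
  (hc : ∀ u, Adj c u ↔ u = a ∨ u = b ∨ u ∈ Set.range leaf)
  (hleaf : ∀ i u, Adj (leaf i) u ↔ u = c)
include hc hleaf

theorem hub_eq_false (h : isPNE k Adj s) (hk : 2 ≤ k) (ha : s a = true) : s c = false := by
  by_contra hc'
  rw [Bool.not_eq_false] at hc'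
  have hN : {u | Adj c u ∧ s u = true} ⊆ {a, b} := by
    rintro u ⟨hcu, hu⟩
    rcases (hc u).1 hcu with rfl | rfl | ⟨i, rfl⟩
    · exact Or.inl rfl
    · exact Or.inr rfl
    · simp [(h.leaf_iff (by omega) (hleaf i)).1 hu] at hc'
  have hpos : 0 < degA Adj s c :=
    (Set.ncard_pos ((Set.toFinite _).subset hN)).2 ⟨a, (hc a).2 (Or.inl rfl), ha⟩
  have hle : degA Adj s c ≤ 2 :=
    (Set.ncard_le_ncard hN).trans ((Set.ncard_insert_le a {b}).trans (by simp))
  rcases (h c).1 hc' with h0 | hk1 <;> omega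

theorem hub_eq_true (h : isPNE k Adj s) (hk : k ≠ 0) (hinj : Function.Injective leaf)
    (ha_leaf : a ∉ Set.range leaf) (ha : s a = true) (hb : s b = false) : s c = true := by
  by_contra hc'
  rw [Bool.not_eq_true] at hc'
  have hN : {u | Adj c u ∧ s u = true} = insert a (Set.range leaf) := by
    ext u
    constructor
    · rintro ⟨hcu, hu⟩
      rcases (hc u).1 hcu with rfl | rfl | hl
      · exact Or.inl rfl
      · simp [hb] at hu
      · exact Or.inr hl
    · rintro (rfl | ⟨i, rfl⟩)
      · exact ⟨(hc _).2 (Or.inl rfl), ha⟩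
      · exact ⟨(hc _).2 (Or.inr (Or.inr ⟨i, rfl⟩)), (h.leaf_iff hk (hleaf i)).2 hc'⟩
  have hdeg : degA Adj s c = k + 1 := by
    rw [degA, hN, Set.ncard_insert_of_notMem ha_leaf, Set.ncard_range_of_injective hinj,
      Nat.card_eq_fintype_card, Fintype.card_fin]
  simp [(h c).2 (Or.inr hdeg)] at hc'

end isPNE

namespace NearOr

variable {V : Type} {l k : ℕ} (AdjV : V → V → Prop) (x : Fin l → V)

abbrev w : V ⊕ Gk k := Sum.inr (Sum.inl 0)
abbrev y : V ⊕ Gk k := Sum.inr (Sum.inl 1)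
abbrev z : V ⊕ Gk k := Sum.inr (Sum.inl 2)
abbrev yLeaf (i : Fin k) : V ⊕ Gk k := Sum.inr (Sum.inr (Sum.inl i))
abbrev zLeaf (i : Fin k) : V ⊕ Gk k := Sum.inr (Sum.inr (Sum.inr i))

theorem yLeaf_injective : Function.Injective (yLeaf (V := V) (k := k)) :=
  fun _ _ h => by simpa using h

theorem w_notMem_range_yLeaf : (w : V ⊕ Gk k) ∉ Set.range yLeaf := by
  rintro ⟨_, h⟩
  cases h

theorem adjH_y_iff (u : V ⊕ Gk k) :
    adjH AdjV x y u ↔ u = w ∨ u = z ∨ u ∈ Set.range yLeaf := by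
  rcases u with a | b | i | i
  · simp [adjH]
  · fin_cases b <;> simp [adjH, adjGk]
  · simp [adjH, adjGk]
  · simp [adjH, adjGk]

theorem adjH_z_iff (u : V ⊕ Gk k) :
    adjH AdjV x z u ↔ u = w ∨ u = y ∨ u ∈ Set.range zLeaf := by
  rcases u with a | b | i | i
  · simp [adjH]
  · fin_cases b <;> simp [adjH, adjGk]
  · simp [adjH, adjGk]
  · simp [adjH, adjGk]

theorem adjH_yLeaf_iff (i : Fin k) (u : V ⊕ Gk k) : adjH AdjV x (yLeaf i) u ↔ u = y := by
  rcases u with a | b | j | j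
  · simp [adjH]
  · fin_cases b <;> simp [adjH, adjGk]
  · simp [adjH, adjGk]
  · simp [adjH, adjGk]

theorem adjH_zLeaf_iff (i : Fin k) (u : V ⊕ Gk k) : adjH AdjV x (zLeaf i) u ↔ u = z := by
  rcases u with a | b | j | j
  · simp [adjH]
  · fin_cases b <;> simp [adjH, adjGk]
  · simp [adjH, adjGk]
  · simp [adjH, adjGk]

end NearOr

theorem stmt11_general (V : Type) (l k : ℕ) (hk : 2 ≤ k)
    (AdjV : V → V → Prop)
    (x : Fin l → V)
    (t : V ⊕ Gk k → Bool) (ht : isPNE k (adjH (k := k) AdjV x) t) :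
    t (Sum.inr (Sum.inl 0)) = false := by
  by_contra hw
  rw [Bool.not_eq_false] at hw
  have hy : t NearOr.y = false :=
    ht.hub_eq_false (NearOr.adjH_y_iff AdjV x) (NearOr.adjH_yLeaf_iff AdjV x) hk hw
  have hz : t NearOr.z = false :=
    ht.hub_eq_false (NearOr.adjH_z_iff AdjV x) (NearOr.adjH_zLeaf_iff AdjV x) hk hw
  have hy' : t NearOr.y = true :=
    ht.hub_eq_true (NearOr.adjH_y_iff AdjV x) (NearOr.adjH_yLeaf_iff AdjV x) (by omega)
      NearOr.yLeaf_injective NearOr.w_notMem_range_yLeaf hw hz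
  simp [hy] at hy'

/-- Safety of the NEAR-OR gadget for `k ≥ 2`: in every PNE `t` of the union graph `H`
(the gadget attached to an arbitrary external graph sharing exactly the operand
vertices), the unique membrane vertex `w` is inactive. -/
theorem stmt11 (V : Type) [Fintype V] (l k : ℕ) (hk : 2 ≤ k)
    (AdjV : V → V → Prop) (hsym : Symmetric AdjV) (hirr : Irreflexive AdjV)
    (x : Fin l → V) (hx : Function.Injective x)
    (t : V ⊕ Gk k → Bool) (ht : isPNE k (adjH (k := k) AdjV x) t) :
    t (Sum.inr (Sum.inl 0)) = false :=
  stmt11_general V l k hk AdjV x t ht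
end

section
/- Fix k ≥ 2 and the homogeneous pattern T with T_ℓ = 1 iff ℓ ∈ {0, k+1}. In the NEAR-OR gadget for k ≥ 2 attached to external operand vertices x_1, ..., x_ℓ, if t is a PNE of the union graph H with t_w = 0 and both t_y = 1 and t_z = 1, then a contradiction arises: specifically, all vertices of Y are inactive (each has exactly one active neighbor, y) and then y's active degree is at most 2 < k+1 while y is active, violating best response. Hence no PNE of H has both y and z active with w inactive. -/
/-!
If `w` is inactive and `y` active, every vertex of `Y` has exactly one active neighbour, `y`,
so it must be inactive (`1 ∉ {0, k+1}`). Then the only active neighbour of `y` is `z`, so `y`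
has active degree `1` too and cannot be active.
-/

theorem isPNE.eq_false_of_activeNeighbors_eq_singleton {Ω : Type} {k : ℕ}
    {Adj : Ω → Ω → Prop} {s : Ω → Bool} (hs : isPNE k Adj s) (hk : k ≠ 0) {v u₀ : Ω}
    (h : {u | Adj v u ∧ s u = true} = {u₀}) : s v = false := by
  have hdeg : degA Adj s v = 1 := by rw [degA, h, Set.ncard_singleton]
  by_contra hv
  have := (hs v).mp (Bool.not_eq_false _ ▸ hv)
  omega

section NearOr

variable {V : Type} {l k : ℕ} (AdjV : V → V → Prop) (x : Fin l → V)

theorem adjH_Y_iff (i : Fin k) (u : V ⊕ Gk k) :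
    adjH AdjV x (Sum.inr (Sum.inr (Sum.inl i))) u ↔ u = Sum.inr (Sum.inl 1) := by
  rcases u with a | (b | j | j)
  · simp [adjH]
  · fin_cases b <;> simp [adjH, adjGk]
  · simp [adjH, adjGk]
  · simp [adjH, adjGk]

theorem adjH_y_iff (u : V ⊕ Gk k) :
    adjH AdjV x (Sum.inr (Sum.inl 1)) u ↔
      u = Sum.inr (Sum.inl 0) ∨ u = Sum.inr (Sum.inl 2) ∨
        ∃ j, u = Sum.inr (Sum.inr (Sum.inl j)) := by
  rcases u with a | (b | j | j)
  · simp [adjH]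
  · fin_cases b <;> simp [adjH, adjGk]
  · simp [adjH, adjGk]
  · simp [adjH, adjGk]

end NearOr

theorem stmt19_general (V : Type) (l k : ℕ) (hk : 2 ≤ k)
    (AdjV : V → V → Prop)
    (x : Fin l → V)
    (t : V ⊕ Gk k → Bool) (ht : isPNE k (adjH (k := k) AdjV x) t) :
    ¬ (t (Sum.inr (Sum.inl 0)) = false ∧
       t (Sum.inr (Sum.inl 1)) = true ∧
       t (Sum.inr (Sum.inl 2)) = true) := by
  rintro ⟨hw, hy, hz⟩
  have hk0 : k ≠ 0 := by omega
  have hY : ∀ i : Fin k, t (Sum.inr (Sum.inr (Sum.inl i))) = false := fun i =>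
    ht.eq_false_of_activeNeighbors_eq_singleton hk0 <| by
      ext u
      simp only [Set.mem_ofPred_eq, Set.mem_singleton_iff, adjH_Y_iff]
      constructor
      · exact And.left
      · rintro rfl; exact ⟨rfl, hy⟩
  have hy' : t (Sum.inr (Sum.inl 1)) = false :=
    ht.eq_false_of_activeNeighbors_eq_singleton (u₀ := Sum.inr (Sum.inl 2)) hk0 <| by
      ext u
      simp only [Set.mem_ofPred_eq, Set.mem_singleton_iff, adjH_y_iff]
      constructor
      · rintro ⟨rfl | rfl | ⟨j, rfl⟩, hu⟩
        · simp [hw] at hu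
        · rfl
        · simp [hY j] at hu
      · rintro rfl; exact ⟨Or.inr (Or.inl rfl), hz⟩
  simp [hy] at hy'

/-- For `k ≥ 2`, no PNE of the union graph `H` (NEAR-OR gadget attached to an
arbitrary external graph sharing exactly the operand vertices) has both `y` and `z`
active while `w` is inactive. -/
theorem stmt19 (V : Type) [Fintype V] (l k : ℕ) (hk : 2 ≤ k)
    (AdjV : V → V → Prop) (hsym : Symmetric AdjV) (hirr : Irreflexive AdjV)
    (x : Fin l → V) (hx : Function.Injective x)
    (t : V ⊕ Gk k → Bool) (ht : isPNE k (adjH (k := k) AdjV x) t) :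
    ¬ (t (Sum.inr (Sum.inl 0)) = false ∧
       t (Sum.inr (Sum.inl 1)) = true ∧
       t (Sum.inr (Sum.inl 2)) = true) :=
  stmt19_general V l k hk AdjV x t ht
end
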